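/- arXiv:1105.1208 — 3 statements merged into one kernel-verified Lean document; each statement's English description precedes it below -/
import Mathlib

section
/- Let Λ be a row-finite 1-graph (i.e. a k-graph with k = 1) with no sources. Then Λ is aperiodic if and only if Λ satisfies condition (L), i.e. every loop has an entrance: for every vertex v and every loop μ ∈ vΛ^p v there exists κ ∈ vΛ^p with κ ≠ μ. -/
set_option autoImplicit false

open scoped Classical

/-- A `k`-graph: a countable small category together with a degree functor
`d : Λ → ℕ^k` satisfying the unique factorization property.  Paths (morphisms)
form a single type; vertices (objects) are identified with the paths of
degree `0`. -/
structure KGraph (k : ℕ) where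
  /-- the type of paths (morphisms) of the `k`-graph -/
  Path : Type
  countable : Countable Path
  nonempty : Nonempty Path
  /-- the range (codomain) vertex of a path -/
  r : Path → Path
  /-- the source (domain) vertex of a path -/
  s : Path → Path
  /-- composition: `comp lam mu` is the path `λμ`, meaningful when `s lam = r mu` -/
  comp : Path → Path → Path
  /-- the degree functor -/
  d : Path → Fin k → ℕ
  d_r : ∀ lam, d (r lam) = 0
  d_s : ∀ lam, d (s lam) = 0
  r_r : ∀ lam, r (r lam) = r lam
  s_r : ∀ lam, s (r lam) = r lam
  r_s : ∀ lam, r (s lam) = s lam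
  s_s : ∀ lam, s (s lam) = s lam
  id_comp : ∀ lam, comp (r lam) lam = lam
  comp_id : ∀ lam, comp lam (s lam) = lam
  r_comp : ∀ lam mu, s lam = r mu → r (comp lam mu) = r lam
  s_comp : ∀ lam mu, s lam = r mu → s (comp lam mu) = s mu
  d_comp : ∀ lam mu, s lam = r mu → d (comp lam mu) = d lam + d mu
  comp_assoc : ∀ lam mu nu, s lam = r mu → s mu = r nu →
    comp (comp lam mu) nu = comp lam (comp mu nu)
  /-- the unique factorization property -/
  factor : ∀ lam (m n : Fin k → ℕ), d lam = m + n →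
    ∃! p : Path × Path, s p.1 = r p.2 ∧ comp p.1 p.2 = lam ∧ d p.1 = m ∧ d p.2 = n

namespace KGraph

variable {k : ℕ}

/-- `v` is a vertex, i.e. an element of `Λ⁰`. -/
def IsVertex (Λ : KGraph k) (v : Λ.Path) : Prop := Λ.d v = 0

/-- `v ≤ w`, i.e. `vΛw ≠ ∅`. -/
def Conn (Λ : KGraph k) (v w : Λ.Path) : Prop := ∃ lam, Λ.r lam = v ∧ Λ.s lam = w

/-- the canonical generator `e i` of `ℕ^k`. -/
def eVec (k : ℕ) (i : Fin k) : Fin k → ℕ := Pi.single i 1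

/-- `Λ` is row-finite: `vΛⁿ` is finite for every vertex `v` and `n ∈ ℕ^k`. -/
def RowFinite (Λ : KGraph k) : Prop :=
  ∀ v, Λ.IsVertex v → ∀ n : Fin k → ℕ, {lam | Λ.r lam = v ∧ Λ.d lam = n}.Finite

/-- `Λ` has no sources: `vΛ^{e i} ≠ ∅` for every vertex `v` and `i`. -/
def NoSources (Λ : KGraph k) : Prop :=
  ∀ v, Λ.IsVertex v → ∀ i : Fin k, ∃ lam, Λ.r lam = v ∧ Λ.d lam = eVec k i

/-- the middle factor `λ(m,n)`: the unique `σ` such that `λ = μστ` with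
`d μ = m`, `d σ = n - m`, `d τ = d λ - n` (junk value if no factorization exists). -/
noncomputable def seg (Λ : KGraph k) (lam : Λ.Path) (m n : Fin k → ℕ) : Λ.Path :=
  if h : ∃ sig, ∃ mu tau, Λ.s mu = Λ.r sig ∧ Λ.s sig = Λ.r tau ∧
      Λ.comp (Λ.comp mu sig) tau = lam ∧ Λ.d mu = m ∧ Λ.d sig = n - m ∧
      Λ.d tau = Λ.d lam - n
  then h.choose else lam

/-- `Λ` has no local periodicity at the vertex `v`. -/
def NoLocalPeriodicity (Λ : KGraph k) (v : Λ.Path) : Prop :=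
  ∀ m n : Fin k → ℕ, m ≠ n →
    ∃ lam, Λ.r lam = v ∧ m ⊔ n ≤ Λ.d lam ∧
      Λ.seg lam m (m + Λ.d lam - (m ⊔ n)) ≠ Λ.seg lam n (n + Λ.d lam - (m ⊔ n))

/-- `Λ` is aperiodic: no vertex has local periodicity. -/
def Aperiodic (Λ : KGraph k) : Prop := ∀ v, Λ.IsVertex v → Λ.NoLocalPeriodicity v

/-- a hereditary set of vertices -/
def Hereditary (Λ : KGraph k) (H : Set Λ.Path) : Prop :=
  ∀ v ∈ H, ∀ w, Λ.Conn v w → w ∈ H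

/-- a saturated set of vertices -/
def Saturated (Λ : KGraph k) (H : Set Λ.Path) : Prop :=
  ∀ v, Λ.IsVertex v → (∃ mu, Λ.r mu = v) →
    (∃ i : Fin k, ∀ lam, Λ.r lam = v → Λ.d lam = eVec k i → Λ.s lam ∈ H) → v ∈ H

/-- the saturation of a set of vertices: the smallest saturated set containing it -/
def saturation (Λ : KGraph k) (H : Set Λ.Path) : Set Λ.Path :=
  ⋂₀ {K : Set Λ.Path | H ⊆ K ∧ Λ.Saturated K}

/-- no local periodicity at the vertex `v` of the quotient graph `Γ(Λ \ H)`
(whose paths are the paths of `Λ` with source outside `H`). -/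
def QuotNoLocalPeriodicity (Λ : KGraph k) (H : Set Λ.Path) (v : Λ.Path) : Prop :=
  ∀ m n : Fin k → ℕ, m ≠ n →
    ∃ lam, Λ.r lam = v ∧ Λ.s lam ∉ H ∧ m ⊔ n ≤ Λ.d lam ∧
      Λ.seg lam m (m + Λ.d lam - (m ⊔ n)) ≠ Λ.seg lam n (n + Λ.d lam - (m ⊔ n))

/-- `Λ` is strongly aperiodic: `Γ(Λ \ H)` is aperiodic for every saturated
hereditary proper subset `H ⊊ Λ⁰`. -/
def StronglyAperiodic (Λ : KGraph k) : Prop :=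
  ∀ H : Set Λ.Path, (∀ v ∈ H, Λ.IsVertex v) → Λ.Hereditary H → Λ.Saturated H →
    H ≠ {v | Λ.IsVertex v} →
    ∀ v, Λ.IsVertex v → v ∉ H → Λ.QuotNoLocalPeriodicity H v

/-- a maximal tail -/
def MaximalTail (Λ : KGraph k) (γ : Set Λ.Path) : Prop :=
  γ.Nonempty ∧ (∀ v ∈ γ, Λ.IsVertex v) ∧
  (∀ v₁ ∈ γ, ∀ v₂ ∈ γ, ∃ w ∈ γ, Λ.Conn v₁ w ∧ Λ.Conn v₂ w) ∧
  (∀ v ∈ γ, ∀ i : Fin k, ∃ f, Λ.r f = v ∧ Λ.d f = eVec k i ∧ Λ.s f ∈ γ) ∧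
  (∀ v, Λ.IsVertex v → ∀ w ∈ γ, Λ.Conn v w → v ∈ γ)

end KGraph

namespace KGraph

/-- a simple loop at the vertex `v` of a `1`-graph: a loop of positive degree
whose vertices `μ(i,i)`, `0 ≤ i ≤ p - 1`, are pairwise distinct -/
def IsSimpleLoop (L : KGraph 1) (v mu : L.Path) : Prop :=
  L.r mu = v ∧ L.s mu = v ∧ L.d mu ≠ 0 ∧
  ∀ i j : ℕ, i < L.d mu 0 → j < L.d mu 0 →
    L.seg mu (fun _ => i) (fun _ => i) = L.seg mu (fun _ => j) (fun _ => j) → i = j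

/-- condition (K) for a `1`-graph: every vertex is the base of either no simple
loop or at least two distinct simple loops -/
def ConditionK (L : KGraph 1) : Prop :=
  ∀ v, L.IsVertex v →
    (¬ ∃ mu, IsSimpleLoop L v mu) ∨
    (∃ mu nu, IsSimpleLoop L v mu ∧ IsSimpleLoop L v nu ∧ mu ≠ nu)

end KGraph

/-! If a loop `μ ∈ vΛ^p v` has no entrance, then `vΛ^{jp} = {μ^j}` for all `j`, and since
there are no sources every `vΛ^n` has at most one element. Hence `λ(0, d λ - p) = λ(p, d λ)`
for every `λ ∈ vΛ`: `v` has local periodicity `(0, p)`.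

Conversely, suppose `λ(m, m + d λ - n) = λ(n, d λ)` for all `λ ∈ vΛ`, where `m < n`. Applied to
`λ = αβγ` with `d α = m` and `d β = d γ = n - m` this gives `β = γ`, so `β` is a loop; applied
to `αβκ` for an entrance `κ ≠ β` of that loop it gives `β = κ`. -/

namespace KGraph

variable {k : ℕ} (Λ : KGraph k)

/-- The set `vΛⁿ`. -/
def paths (v : Λ.Path) (n : Fin k → ℕ) : Set Λ.Path := {lam | Λ.r lam = v ∧ Λ.d lam = n}

def HasPathsOfDegree (n : Fin k → ℕ) : Prop :=
  ∀ v, Λ.IsVertex v → ∃ lam, Λ.r lam = v ∧ Λ.d lam = n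

/-- `Λ.NoLocalPeriodicity v` unfolds to `∀ m n, m ≠ n → Λ.Distinguishes v m n`. -/
def Distinguishes (v : Λ.Path) (m n : Fin k → ℕ) : Prop :=
  ∃ lam, Λ.r lam = v ∧ m ⊔ n ≤ Λ.d lam ∧
    Λ.seg lam m (m + Λ.d lam - (m ⊔ n)) ≠ Λ.seg lam n (n + Λ.d lam - (m ⊔ n))

def ConditionL : Prop :=
  ∀ v mu : Λ.Path, Λ.IsVertex v → Λ.r mu = v → Λ.s mu = v → Λ.d mu ≠ 0 →
    ∃ kap, Λ.r kap = v ∧ Λ.d kap = Λ.d mu ∧ kap ≠ mu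

variable {Λ}

lemma exists_comp_eq {lam : Λ.Path} {m n : Fin k → ℕ} (h : Λ.d lam = m + n) :
    ∃ a b, Λ.s a = Λ.r b ∧ Λ.comp a b = lam ∧ Λ.d a = m ∧ Λ.d b = n :=
  let ⟨⟨a, b⟩, hab, _⟩ := Λ.factor lam m n h
  ⟨a, b, hab⟩

lemma eq_of_comp_eq {a b a' b' : Λ.Path} (hab : Λ.s a = Λ.r b) (hab' : Λ.s a' = Λ.r b')
    (hc : Λ.comp a b = Λ.comp a' b') (hd : Λ.d a = Λ.d a') : a = a' ∧ b = b' := by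
  have hdb : Λ.d b = Λ.d b' := by
    have h := Λ.d_comp a b hab
    rwa [hc, Λ.d_comp a' b' hab', hd, add_right_inj, eq_comm] at h
  obtain ⟨_, _, huniq⟩ := Λ.factor (Λ.comp a b) (Λ.d a) (Λ.d b) (Λ.d_comp a b hab)
  have h := (huniq (a, b) ⟨hab, rfl, rfl, rfl⟩).trans
    (huniq (a', b') ⟨hab', hc.symm, hd.symm, hdb.symm⟩).symm
  exact Prod.ext_iff.mp h

lemma r_eq_self_of_isVertex {v : Λ.Path} (hv : Λ.IsVertex v) : Λ.r v = v := by
  obtain ⟨_, _, huniq⟩ := Λ.factor v 0 0 (by rw [hv, add_zero])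
  have h := (huniq (Λ.r v, v) ⟨Λ.s_r v, Λ.id_comp v, Λ.d_r v, hv⟩).trans
    (huniq (v, Λ.s v) ⟨(Λ.r_s v).symm, Λ.comp_id v, hv, Λ.d_s v⟩).symm
  exact congrArg Prod.fst h

lemma seg_eq_of_comp {lam mu sig tau : Λ.Path} {m n : Fin k → ℕ}
    (h1 : Λ.s mu = Λ.r sig) (h2 : Λ.s sig = Λ.r tau) (h3 : Λ.comp (Λ.comp mu sig) tau = lam)
    (hm : Λ.d mu = m) (hn : Λ.d sig = n - m) (ht : Λ.d tau = Λ.d lam - n) :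
    Λ.seg lam m n = sig := by
  have hex : ∃ sig', ∃ mu' tau', Λ.s mu' = Λ.r sig' ∧ Λ.s sig' = Λ.r tau' ∧
      Λ.comp (Λ.comp mu' sig') tau' = lam ∧ Λ.d mu' = m ∧ Λ.d sig' = n - m ∧
      Λ.d tau' = Λ.d lam - n := ⟨sig, mu, tau, h1, h2, h3, hm, hn, ht⟩
  rw [seg, dif_pos hex]
  obtain ⟨mu', tau', h1', h2', h3', hm', hn', -⟩ := hex.choose_spec
  have hcomp : Λ.comp mu' (Λ.comp hex.choose tau') = Λ.comp mu (Λ.comp sig tau) := by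
    rw [← Λ.comp_assoc _ _ _ h1' h2', ← Λ.comp_assoc _ _ _ h1 h2, h3, h3']
  have hsuffix := (eq_of_comp_eq (by rwa [Λ.r_comp _ _ h2']) (by rwa [Λ.r_comp _ _ h2]) hcomp
    (hm'.trans hm.symm)).2
  exact (eq_of_comp_eq h2' h2 hsuffix (hn'.trans hn.symm)).1

lemma seg_comp_comp {a b c : Λ.Path} (hab : Λ.s a = Λ.r b) (hbc : Λ.s b = Λ.r c) :
    Λ.seg (Λ.comp (Λ.comp a b) c) (Λ.d a) (Λ.d a + Λ.d b) = b :=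
  seg_eq_of_comp hab hbc rfl rfl (add_tsub_cancel_left _ _).symm <| by
    rw [Λ.d_comp _ _ (by rwa [Λ.s_comp _ _ hab]), Λ.d_comp _ _ hab, add_tsub_cancel_left]

lemma seg_comp_zero {a b : Λ.Path} (hab : Λ.s a = Λ.r b) :
    Λ.seg (Λ.comp a b) 0 (Λ.d a) = a := by
  have h := seg_comp_comp (Λ.s_r a) hab
  rwa [Λ.id_comp, Λ.d_r, zero_add] at h

lemma seg_comp_of_d {a b : Λ.Path} (hab : Λ.s a = Λ.r b) :
    Λ.seg (Λ.comp a b) (Λ.d a) (Λ.d a + Λ.d b) = b := by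
  have h := seg_comp_comp hab (Λ.r_s b).symm
  rwa [← Λ.s_comp _ _ hab, Λ.comp_id] at h

lemma hasPathsOfDegree_zero : Λ.HasPathsOfDegree 0 :=
  fun v hv => ⟨v, r_eq_self_of_isVertex hv, hv⟩

lemma HasPathsOfDegree.add {m n : Fin k → ℕ} (hm : Λ.HasPathsOfDegree m)
    (hn : Λ.HasPathsOfDegree n) : Λ.HasPathsOfDegree (m + n) := by
  intro v hv
  obtain ⟨a, hra, hda⟩ := hm v hv
  obtain ⟨b, hrb, hdb⟩ := hn (Λ.s a) (Λ.d_s a)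
  exact ⟨Λ.comp a b, by rw [Λ.r_comp _ _ hrb.symm, hra], by rw [Λ.d_comp _ _ hrb.symm, hda, hdb]⟩

lemma NoSources.hasPathsOfDegree (hns : Λ.NoSources) (n : Fin k → ℕ) :
    Λ.HasPathsOfDegree n := by
  have hsingle (i : Fin k) (q : ℕ) : Λ.HasPathsOfDegree (Pi.single i q) := by
    induction q with
    | zero => rw [Pi.single_zero]; exact hasPathsOfDegree_zero
    | succ q ih => rw [Pi.single_add]; exact ih.add (fun v hv => hns v hv i)
  rw [← Finset.univ_sum_single n]
  exact Finset.sum_induction _ _ (fun _ _ => HasPathsOfDegree.add) hasPathsOfDegree_zero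
    (fun i _ => hsingle i (n i))

lemma paths_zero_subsingleton (v : Λ.Path) : (Λ.paths v 0).Subsingleton := by
  rintro a ⟨hra, ha⟩ b ⟨hrb, hb⟩
  rw [← r_eq_self_of_isVertex ha, hra, ← hrb, r_eq_self_of_isVertex hb]

lemma paths_subsingleton_of_le {v : Λ.Path} {m n : Fin k → ℕ}
    (hn : (Λ.paths v n).Subsingleton) (hmn : m ≤ n) (hext : Λ.HasPathsOfDegree (n - m)) :
    (Λ.paths v m).Subsingleton := by
  rintro a ⟨hra, hda⟩ b ⟨hrb, hdb⟩
  have extend (c : Λ.Path) (hrc : Λ.r c = v) (hdc : Λ.d c = m) :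
      ∃ e, Λ.s c = Λ.r e ∧ Λ.comp c e ∈ Λ.paths v n := by
    obtain ⟨e, hre, hde⟩ := hext (Λ.s c) (Λ.d_s c)
    exact ⟨e, hre.symm, by rw [Λ.r_comp _ _ hre.symm, hrc],
      by rw [Λ.d_comp _ _ hre.symm, hdc, hde, add_tsub_cancel_of_le hmn]⟩
  obtain ⟨e, hae, ha⟩ := extend a hra hda
  obtain ⟨e', hbe', hb⟩ := extend b hrb hdb
  exact (eq_of_comp_eq hae hbe' (hn ha hb) (hda.trans hdb.symm)).1

lemma paths_add_subsingleton {v mu : Λ.Path} {p n : Fin k → ℕ}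
    (hp : (Λ.paths v p).Subsingleton) (hmu : mu ∈ Λ.paths v p) (hs : Λ.s mu = v)
    (hn : (Λ.paths v n).Subsingleton) : (Λ.paths v (p + n)).Subsingleton := by
  have split (lam : Λ.Path) (hlam : lam ∈ Λ.paths v (p + n)) :
      ∃ b ∈ Λ.paths v n, Λ.comp mu b = lam := by
    obtain ⟨a, b, hab, rfl, hda, hdb⟩ := exists_comp_eq hlam.2
    obtain rfl : a = mu := hp ⟨by rw [← hlam.1, Λ.r_comp _ _ hab], hda⟩ hmu
    exact ⟨b, ⟨by rw [← hab, hs], hdb⟩, rfl⟩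
  intro lam hlam lam' hlam'
  obtain ⟨b, hb, rfl⟩ := split lam hlam
  obtain ⟨b', hb', rfl⟩ := split lam' hlam'
  rw [hn hb hb']

lemma paths_nsmul_subsingleton {v mu : Λ.Path} {p : Fin k → ℕ}
    (hp : (Λ.paths v p).Subsingleton) (hmu : mu ∈ Λ.paths v p) (hs : Λ.s mu = v) (j : ℕ) :
    (Λ.paths v (j • p)).Subsingleton := by
  induction j with
  | zero => rw [zero_nsmul]; exact paths_zero_subsingleton v
  | succ j ih => rw [succ_nsmul']; exact paths_add_subsingleton hp hmu hs ih

lemma Distinguishes.symm {v : Λ.Path} {m n : Fin k → ℕ} (h : Λ.Distinguishes v m n) :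
    Λ.Distinguishes v n m := by
  obtain ⟨lam, hr, hle, hne⟩ := h
  rw [sup_comm] at hle hne
  exact ⟨lam, hr, hle, hne.symm⟩

lemma distinguishes_add_iff {v : Λ.Path} {m q : Fin k → ℕ} :
    Λ.Distinguishes v m (m + q) ↔
      ∃ lam, Λ.r lam = v ∧ m + q ≤ Λ.d lam ∧
        Λ.seg lam m (Λ.d lam - q) ≠ Λ.seg lam (m + q) (Λ.d lam) := by
  simp only [Distinguishes, sup_eq_right.2 (le_add_right le_rfl : m ≤ m + q),
    add_tsub_add_eq_tsub_left, add_tsub_cancel_left]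

lemma not_distinguishes_zero_of_subsingleton {v mu : Λ.Path} {p : Fin k → ℕ}
    (hmu : mu ∈ Λ.paths v p) (hs : Λ.s mu = v) (hsub : ∀ n, (Λ.paths v n).Subsingleton) :
    ¬ Λ.Distinguishes v 0 p := by
  rw [← zero_add p, distinguishes_add_iff, zero_add]
  rintro ⟨lam, hr, hle, hne⟩
  obtain ⟨a, b, hab, hlam, hda, -⟩ :=
    exists_comp_eq (m := Λ.d lam - p) (n := p) (tsub_add_cancel_of_le hle).symm
  obtain ⟨a', b', hab', hlam', hda', hdb'⟩ :=
    exists_comp_eq (m := p) (n := Λ.d lam - p) (add_tsub_cancel_of_le hle).symm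
  have hprefix : Λ.seg lam 0 (Λ.d lam - p) = a := by
    rw [← hda, ← hlam]; exact seg_comp_zero hab
  have hsuffix : Λ.seg lam p (Λ.d lam) = b' := by
    have h := seg_comp_of_d hab'
    rwa [← Λ.d_comp _ _ hab', hlam', hda'] at h
  have hra : Λ.r a = v := by rw [← Λ.r_comp _ _ hab, hlam, hr]
  obtain rfl : a' = mu := hsub p ⟨by rw [← Λ.r_comp _ _ hab', hlam', hr], hda'⟩ hmu
  exact hne (hprefix.trans ((hsub _ ⟨hra, hda⟩ ⟨by rw [← hab', hs], hdb'⟩).trans hsuffix.symm))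

lemma distinguishes_add_of_conditionL (hns : Λ.NoSources) (hL : Λ.ConditionL) {v : Λ.Path}
    (hv : Λ.IsVertex v) (m : Fin k → ℕ) {q : Fin k → ℕ} (hq : q ≠ 0) :
    Λ.Distinguishes v m (m + q) := by
  rw [distinguishes_add_iff]
  by_contra! hper
  obtain ⟨a, hra, hda⟩ := hns.hasPathsOfDegree m v hv
  obtain ⟨b, hab, hdb⟩ := hns.hasPathsOfDegree q (Λ.s a) (Λ.d_s a)
  have hseg (c : Λ.Path) (hbc : Λ.s b = Λ.r c) (hdc : Λ.d c = q) : b = c := by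
    have hx : Λ.s (Λ.comp a b) = Λ.r c := by rwa [Λ.s_comp _ _ hab.symm]
    have hdx : Λ.d (Λ.comp (Λ.comp a b) c) = m + q + q := by
      rw [Λ.d_comp _ _ hx, Λ.d_comp _ _ hab.symm, hda, hdb, hdc]
    have h := hper (Λ.comp (Λ.comp a b) c)
      (by rw [Λ.r_comp _ _ hx, Λ.r_comp _ _ hab.symm, hra]) (by rw [hdx]; exact le_self_add)
    have hmid := seg_comp_comp hab.symm hbc
    have hend := seg_comp_of_d hx
    rw [hdx, add_tsub_cancel_right] at h
    rw [Λ.d_comp _ _ hab.symm, hda, hdb, hdc] at hend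
    rw [hda, hdb] at hmid
    rw [← hmid, h, hend]
  obtain ⟨c, hcb, hdc⟩ := hns.hasPathsOfDegree q (Λ.s b) (Λ.d_s b)
  obtain rfl : b = c := hseg c hcb.symm hdc
  obtain ⟨kap, hrk, hdk, hne⟩ := hL (Λ.r b) b (Λ.d_r b) rfl hcb.symm (hdb ▸ hq)
  exact hne (hseg kap (hcb.symm.trans hrk.symm) (hdk.trans hdb)).symm

lemma le_total_fin_one (m n : Fin 1 → ℕ) : m ≤ n ∨ n ≤ m := by
  simp only [Pi.le_def, Fin.forall_fin_one]
  exact le_total _ _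

lemma le_nsmul_fin_one (n : Fin 1 → ℕ) {p : Fin 1 → ℕ} (hp : p ≠ 0) : n ≤ n 0 • p := by
  have hp0 : 1 ≤ p 0 := Nat.one_le_iff_ne_zero.2 fun h => hp (funext (Fin.forall_fin_one.2 h))
  simp only [Pi.le_def, Fin.forall_fin_one, Pi.smul_apply, smul_eq_mul]
  exact Nat.le_mul_of_pos_right _ hp0

lemma conditionL_of_aperiodic {Λ : KGraph 1} (hns : Λ.NoSources) (hap : Λ.Aperiodic) :
    Λ.ConditionL := by
  intro v mu hv hr hs hd
  by_contra! hno
  have hmu : mu ∈ Λ.paths v (Λ.d mu) := ⟨hr, rfl⟩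
  have hloop : (Λ.paths v (Λ.d mu)).Subsingleton :=
    fun a ha b hb => (hno a ha.1 ha.2).trans (hno b hb.1 hb.2).symm
  have hsub (n : Fin 1 → ℕ) : (Λ.paths v n).Subsingleton :=
    paths_subsingleton_of_le (paths_nsmul_subsingleton hloop hmu hs (n 0))
      (le_nsmul_fin_one n hd) (hns.hasPathsOfDegree _)
  exact not_distinguishes_zero_of_subsingleton hmu hs hsub (hap v hv 0 _ hd.symm)

lemma aperiodic_of_conditionL {Λ : KGraph 1} (hns : Λ.NoSources) (hL : Λ.ConditionL) :
    Λ.Aperiodic := by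
  intro v hv m n hmn
  have of_lt {m n : Fin 1 → ℕ} (h : m < n) : Λ.Distinguishes v m n := by
    rw [← add_tsub_cancel_of_le h.le]
    exact distinguishes_add_of_conditionL hns hL hv m (tsub_pos_of_lt h).ne'
  rcases le_total_fin_one m n with hle | hle
  · exact of_lt (lt_of_le_of_ne hle hmn)
  · exact (of_lt (lt_of_le_of_ne hle hmn.symm)).symm

end KGraph

theorem stmt0_general (Λ : KGraph 1) (hns : Λ.NoSources) :
    Λ.Aperiodic ↔
      (∀ v mu : Λ.Path, Λ.IsVertex v → Λ.r mu = v → Λ.s mu = v → Λ.d mu ≠ 0 →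
        ∃ kap, Λ.r kap = v ∧ Λ.d kap = Λ.d mu ∧ kap ≠ mu) :=
  ⟨KGraph.conditionL_of_aperiodic hns, KGraph.aperiodic_of_conditionL hns⟩

/-- For row-finite `1`-graphs with no sources, aperiodicity is equivalent to
condition (L): every loop has an entrance. -/
theorem stmt0 (Λ : KGraph 1) (hrf : Λ.RowFinite) (hns : Λ.NoSources) :
    Λ.Aperiodic ↔
      (∀ v mu : Λ.Path, Λ.IsVertex v → Λ.r mu = v → Λ.s mu = v → Λ.d mu ≠ 0 →
        ∃ kap, Λ.r kap = v ∧ Λ.d kap = Λ.d mu ∧ kap ≠ mu) :=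
  stmt0_general Λ hns
end

section
/- Let Λ be a row-finite 2-graph with no sources and suppose (α₁, α₂, β₁, β₂) is a (1,1)-aperiodic quartet at a vertex u ∈ Λ^0. Then Λ has no local periodicity at u. -/
set_option autoImplicit false

open scoped Classical

namespace KGraph

/-- an `(a,b)`-aperiodic quartet at the vertex `u` of a `2`-graph -/
def AperiodicQuartet (L : KGraph 2) (u : L.Path) (a b : ℕ)
    (al1 al2 be1 be2 : L.Path) : Prop :=
  0 < a ∧ 0 < b ∧
  al1 ≠ al2 ∧ be1 ≠ be2 ∧
  L.r al1 = u ∧ L.s al1 = u ∧ L.d al1 = Pi.single (0 : Fin 2) a ∧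
  L.r al2 = u ∧ L.s al2 = u ∧ L.d al2 = Pi.single (0 : Fin 2) a ∧
  L.r be1 = u ∧ L.s be1 = u ∧ L.d be1 = Pi.single (1 : Fin 2) b ∧
  L.r be2 = u ∧ L.s be2 = u ∧ L.d be2 = Pi.single (1 : Fin 2) b ∧
  L.comp be2 al1 = L.comp al1 be2 ∧
  L.comp be2 al2 = L.comp al2 be2 ∧
  L.comp be1 al1 = L.comp al2 be1 ∧
  L.comp be1 al2 = L.comp al1 be1

end KGraph


namespace KGraph

variable {k : ℕ} {Λ : KGraph k}

/-- Uniqueness of the middle segment: any factorization `lam = mu · sig · tau`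
with the right degrees identifies `sig` with `Λ.seg lam m n`. -/
lemma seg_eq' (lam mu sig tau : Λ.Path) (m n : Fin k → ℕ)
    (h1 : Λ.s mu = Λ.r sig) (h2 : Λ.s sig = Λ.r tau)
    (h3 : Λ.comp (Λ.comp mu sig) tau = lam)
    (h4 : Λ.d mu = m) (h5 : Λ.d sig = n - m) (h6 : Λ.d tau = Λ.d lam - n) :
    Λ.seg lam m n = sig := by
  have hex : ∃ sig', ∃ mu' tau', Λ.s mu' = Λ.r sig' ∧ Λ.s sig' = Λ.r tau' ∧
      Λ.comp (Λ.comp mu' sig') tau' = lam ∧ Λ.d mu' = m ∧ Λ.d sig' = n - m ∧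
      Λ.d tau' = Λ.d lam - n := ⟨sig, mu, tau, h1, h2, h3, h4, h5, h6⟩
  rw [seg, dif_pos hex]
  obtain ⟨mu', tau', h1', h2', h3', h4', h5', h6'⟩ := hex.choose_spec
  set sig' := hex.choose with hsig'
  have hst : Λ.s (Λ.comp mu sig) = Λ.r tau := by rw [Λ.s_comp _ _ h1]; exact h2
  have hdl : Λ.d lam = m + ((n - m) + (Λ.d lam - n)) := by
    conv_lhs => rw [← h3]
    rw [Λ.d_comp _ _ hst, Λ.d_comp _ _ h1, h4, h5, h6, add_assoc]
  have hfac := Λ.factor lam m ((n - m) + (Λ.d lam - n)) hdl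
  have e1 : Λ.s mu = Λ.r (Λ.comp sig tau) ∧ Λ.comp mu (Λ.comp sig tau) = lam ∧
      Λ.d mu = m ∧ Λ.d (Λ.comp sig tau) = (n - m) + (Λ.d lam - n) := by
    refine ⟨by rw [Λ.r_comp _ _ h2]; exact h1, ?_, h4, by rw [Λ.d_comp _ _ h2, h5, h6]⟩
    rw [← Λ.comp_assoc _ _ _ h1 h2, h3]
  have e2 : Λ.s mu' = Λ.r (Λ.comp sig' tau') ∧ Λ.comp mu' (Λ.comp sig' tau') = lam ∧
      Λ.d mu' = m ∧ Λ.d (Λ.comp sig' tau') = (n - m) + (Λ.d lam - n) := by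
    refine ⟨by rw [Λ.r_comp _ _ h2']; exact h1', ?_, h4', by rw [Λ.d_comp _ _ h2', h5', h6']⟩
    rw [← Λ.comp_assoc _ _ _ h1' h2', h3']
  have hpair : (mu, Λ.comp sig tau) = (mu', Λ.comp sig' tau') :=
    hfac.unique e1 e2
  have hrho : Λ.comp sig tau = Λ.comp sig' tau' := congrArg Prod.snd hpair
  have hfac2 := Λ.factor (Λ.comp sig tau) (n - m) (Λ.d lam - n)
    (by rw [Λ.d_comp _ _ h2, h5, h6])
  have f1 : Λ.s sig = Λ.r tau ∧ Λ.comp sig tau = Λ.comp sig tau ∧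
      Λ.d sig = n - m ∧ Λ.d tau = Λ.d lam - n := ⟨h2, rfl, h5, h6⟩
  have f2 : Λ.s sig' = Λ.r tau' ∧ Λ.comp sig' tau' = Λ.comp sig tau ∧
      Λ.d sig' = n - m ∧ Λ.d tau' = Λ.d lam - n := ⟨h2', hrho.symm, h5', h6'⟩
  have hpair2 : (sig, tau) = (sig', tau') := hfac2.unique f1 f2
  exact (congrArg Prod.fst hpair2).symm

/-- The monoid of loops based at a vertex `u`. -/
def LoopAt (Λ : KGraph k) (u : Λ.Path) : Type := {x : Λ.Path // Λ.r x = u ∧ Λ.s x = u}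

variable {u : Λ.Path}

instance [hu : Fact (Λ.r u = u ∧ Λ.s u = u)] : Monoid (LoopAt Λ u) where
  mul x y := ⟨Λ.comp x.1 y.1,
    by rw [Λ.r_comp _ _ (x.2.2.trans y.2.1.symm)]; exact x.2.1,
    by rw [Λ.s_comp _ _ (x.2.2.trans y.2.1.symm)]; exact y.2.2⟩
  one := ⟨u, hu.out.1, hu.out.2⟩
  mul_assoc a b c := Subtype.ext
    (Λ.comp_assoc _ _ _ (a.2.2.trans b.2.1.symm) (b.2.2.trans c.2.1.symm))
  one_mul a := Subtype.ext (by
    have h := Λ.id_comp a.1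
    rw [a.2.1] at h
    exact h)
  mul_one a := Subtype.ext (by
    have h := Λ.comp_id a.1
    rw [a.2.2] at h
    exact h)

section LoopAt

variable [Fact (Λ.r u = u ∧ Λ.s u = u)]

lemma mul_val (x y : LoopAt Λ u) : (x * y).1 = Λ.comp x.1 y.1 := rfl

lemma one_val : (1 : LoopAt Λ u).1 = u := rfl

lemma d_mul_val (x y : LoopAt Λ u) : Λ.d (x * y).1 = Λ.d x.1 + Λ.d y.1 :=
  Λ.d_comp _ _ (x.2.2.trans y.2.1.symm)

lemma d_pow_val (hud : Λ.d u = 0) (x : LoopAt Λ u) :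
    ∀ nn : ℕ, Λ.d ((x ^ nn).1) = nn • Λ.d x.1
  | 0 => by rw [pow_zero, one_val, hud, zero_smul]
  | nn + 1 => by rw [pow_succ, d_mul_val, d_pow_val hud x nn, succ_nsmul]

end LoopAt

lemma swap4 {M : Type*} [Monoid M] {a b c d : M} (h : a * b = c * d) (e : M) :
    a * (b * e) = c * (d * e) := by rw [← mul_assoc, h, mul_assoc]

lemma pow_mul_single {M : Type*} [Monoid M] (a : M) (rr : ℕ) (c : M) :
    a ^ rr * (a * c) = a ^ (rr + 1) * c := by rw [← mul_assoc, ← pow_succ]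

lemma pow_swap {M : Type*} [Monoid M] {x x' y : M} (h : y * x = x' * y) :
    ∀ nn : ℕ, y * x ^ nn = x' ^ nn * y
  | 0 => by simp
  | nn + 1 => by
      rw [pow_succ, ← mul_assoc, pow_swap h nn, mul_assoc, h, ← mul_assoc, ← pow_succ]

lemma nat_sup_facts (a b : ℕ) : a ≤ a ⊔ b ∧ b ≤ a ⊔ b ∧ (a ⊔ b = a ∨ a ⊔ b = b) :=
  ⟨le_sup_left, le_sup_right, (le_total b a).imp sup_of_le_left sup_of_le_right⟩

end KGraph
namespace KGraph

lemma caseA (Λ : KGraph 2) {u : Λ.Path} [Fact (Λ.r u = u ∧ Λ.s u = u)]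
    (hud : Λ.d u = 0) (al1 al2 be1 be2 : Λ.Path)
    (ra1 : Λ.r al1 = u) (sa1 : Λ.s al1 = u) (da1 : Λ.d al1 = Pi.single 0 1)
    (ra2 : Λ.r al2 = u) (sa2 : Λ.s al2 = u) (da2 : Λ.d al2 = Pi.single 0 1)
    (rb1 : Λ.r be1 = u) (sb1 : Λ.s be1 = u) (db1 : Λ.d be1 = Pi.single 1 1)
    (rb2 : Λ.r be2 = u) (sb2 : Λ.s be2 = u) (db2 : Λ.d be2 = Pi.single 1 1)
    (hc1 : Λ.comp be2 al1 = Λ.comp al1 be2)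
    (hc3 : Λ.comp be1 al1 = Λ.comp al2 be1)
    (m n : Fin 2 → ℕ) (hlt : m 1 < n 1) :
    ∃ lam, Λ.r lam = u ∧ m ⊔ n ≤ Λ.d lam ∧
      Λ.seg lam m (m + Λ.d lam - (m ⊔ n)) = be1 ∧
      Λ.seg lam n (n + Λ.d lam - (m ⊔ n)) = be2 := by
  set A1 : LoopAt Λ u := ⟨al1, ra1, sa1⟩ with hA1
  set A2 : LoopAt Λ u := ⟨al2, ra2, sa2⟩ with hA2
  set B1 : LoopAt Λ u := ⟨be1, rb1, sb1⟩ with hB1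
  set B2 : LoopAt Λ u := ⟨be2, rb2, sb2⟩ with hB2
  have dA1 : Λ.d A1.1 = Pi.single 0 1 := by rw [hA1]; exact da1
  have dA2 : Λ.d A2.1 = Pi.single 0 1 := by rw [hA2]; exact da2
  have dB1 : Λ.d B1.1 = Pi.single 1 1 := by rw [hB1]; exact db1
  have dB2 : Λ.d B2.1 = Pi.single 1 1 := by rw [hB2]; exact db2
  have cB2A1 : Commute B2 A1 := by rw [hB2, hA1]; exact Subtype.ext hc1
  have hB1A1 : B1 * A1 = A2 * B1 := by rw [hB1, hA1, hA2]; exact Subtype.ext hc3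
  obtain ⟨rr, hr⟩ : ∃ rr, n 1 - m 1 = rr + 1 := ⟨n 1 - m 1 - 1, by omega⟩
  set M1 := max (m 0) (n 0) with hM1
  have hpM : m 0 ≤ M1 := le_max_left _ _
  have hqM : n 0 ≤ M1 := le_max_right _ _
  set Mu1 := B2 ^ m 1 * A2 ^ m 0 with hMu1
  set Tau1 := B2 ^ (n 1 - m 1) * A1 ^ (M1 - m 0) with hTau1
  set Lam := Mu1 * B1 * Tau1 with hLam
  set Mu2 := B2 ^ m 1 * B1 * B2 ^ rr * A1 ^ n 0 with hMu2
  set Tau2 := A1 ^ (M1 - n 0) with hTau2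
  have hid : Mu2 * B2 * Tau2 = Lam := by
    rw [hMu2, hTau2, hLam, hMu1, hTau1]
    simp only [mul_assoc]
    rw [swap4 ((cB2A1.pow_right (n 0)).eq.symm), pow_mul_single, ← hr, ← pow_add,
      Nat.add_sub_cancel' hqM, swap4 ((pow_swap hB1A1 (m 0)).symm),
      swap4 ((cB2A1.pow_pow (n 1 - m 1) (m 0)).eq.symm), ← pow_add,
      Nat.add_sub_cancel' hpM]
  have hdL0 : Λ.d Lam.1 0 = M1 := by
    rw [hLam, hMu1, hTau1]
    simp [d_mul_val, d_pow_val hud, dA1, dA2, dB1, dB2, Pi.single_apply]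
    all_goals omega
  have hdL1 : Λ.d Lam.1 1 = n 1 + 1 := by
    rw [hLam, hMu1, hTau1]
    simp [d_mul_val, d_pow_val hud, dA1, dA2, dB1, dB2, Pi.single_apply]
    all_goals omega
  refine ⟨Lam.1, Lam.2.1, ?_, ?_, ?_⟩
  · intro i
    fin_cases i <;> simp [Pi.sup_apply, hdL0, hdL1] <;> omega
  · refine seg_eq' Lam.1 Mu1.1 be1 Tau1.1 m _ (Mu1.2.2.trans rb1.symm)
      (sb1.trans Tau1.2.1.symm) (by rw [hLam, hB1]; rfl) ?_ ?_ ?_ <;>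
    · funext i
      fin_cases i <;>
        simp [hMu1, hTau1, d_mul_val, d_pow_val hud, dA1, dA2, dB1, dB2, db1,
          Pi.single_apply, Pi.sup_apply, hdL0, hdL1] <;> omega
  · refine seg_eq' Lam.1 Mu2.1 be2 Tau2.1 n _ (Mu2.2.2.trans rb2.symm)
      (sb2.trans Tau2.2.1.symm) (by rw [← hid, hB2]; rfl) ?_ ?_ ?_ <;>
    · funext i
      fin_cases i <;>
        simp [hMu2, hTau2, d_mul_val, d_pow_val hud, dA1, dA2, dB1, dB2, db2,
          Pi.single_apply, Pi.sup_apply, hdL0, hdL1] <;> omega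

lemma caseB (Λ : KGraph 2) {u : Λ.Path} [Fact (Λ.r u = u ∧ Λ.s u = u)]
    (hur : Λ.r u = u) (hud : Λ.d u = 0) (al1 al2 be2 : Λ.Path)
    (ra1 : Λ.r al1 = u) (sa1 : Λ.s al1 = u) (da1 : Λ.d al1 = Pi.single 0 1)
    (ra2 : Λ.r al2 = u) (sa2 : Λ.s al2 = u) (da2 : Λ.d al2 = Pi.single 0 1)
    (rb2 : Λ.r be2 = u) (sb2 : Λ.s be2 = u) (db2 : Λ.d be2 = Pi.single 1 1)
    (hc1 : Λ.comp be2 al1 = Λ.comp al1 be2)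
    (hc2 : Λ.comp be2 al2 = Λ.comp al2 be2)
    (m n : Fin 2 → ℕ) (heq : m 1 = n 1) (hlt : m 0 < n 0) :
    ∃ lam, Λ.r lam = u ∧ m ⊔ n ≤ Λ.d lam ∧
      Λ.seg lam m (m + Λ.d lam - (m ⊔ n)) = al2 ∧
      Λ.seg lam n (n + Λ.d lam - (m ⊔ n)) = al1 := by
  set A1 : LoopAt Λ u := ⟨al1, ra1, sa1⟩ with hA1
  set A2 : LoopAt Λ u := ⟨al2, ra2, sa2⟩ with hA2
  set B2 : LoopAt Λ u := ⟨be2, rb2, sb2⟩ with hB2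
  have dA1 : Λ.d A1.1 = Pi.single 0 1 := by rw [hA1]; exact da1
  have dA2 : Λ.d A2.1 = Pi.single 0 1 := by rw [hA2]; exact da2
  have dB2 : Λ.d B2.1 = Pi.single 1 1 := by rw [hB2]; exact db2
  have cB2A1 : Commute B2 A1 := by rw [hB2, hA1]; exact Subtype.ext hc1
  have cB2A2 : Commute B2 A2 := by rw [hB2, hA2]; exact Subtype.ext hc2
  obtain ⟨ss, hs⟩ : ∃ ss, n 0 - m 0 = ss + 1 := ⟨n 0 - m 0 - 1, by omega⟩
  set Mu1 := A1 ^ m 0 * B2 ^ m 1 with hMu1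
  set Tau1 := A1 ^ (n 0 - m 0) with hTau1
  set Lam := Mu1 * A2 * Tau1 with hLam
  set Mu2 := A1 ^ m 0 * A2 * A1 ^ ss * B2 ^ m 1 with hMu2
  have hid : Mu2 * A1 = Lam := by
    rw [hMu2, hLam, hMu1, hTau1]
    simp only [mul_assoc]
    rw [(cB2A1.pow_left (m 1)).eq, pow_mul_single, ← hs,
      (cB2A1.pow_pow (m 1) (n 0 - m 0)).eq.symm,
      swap4 ((cB2A2.pow_left (m 1)).eq.symm)]
  have h3' : Λ.comp (Λ.comp Mu2.1 al1) u = Lam.1 := by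
    have e : Λ.comp (Λ.comp Mu2.1 al1) u = (Mu2 * A1).1 := by
      have h := Λ.comp_id (Mu2 * A1).1
      rw [(Mu2 * A1).2.2] at h
      rw [hA1]
      exact h
    rw [hid] at e
    exact e
  have hdL0 : Λ.d Lam.1 0 = n 0 + 1 := by
    rw [hLam, hMu1, hTau1]
    simp [d_mul_val, d_pow_val hud, dA1, dA2, dB2, Pi.single_apply]
    all_goals omega
  have hdL1 : Λ.d Lam.1 1 = m 1 := by
    rw [hLam, hMu1, hTau1]
    simp [d_mul_val, d_pow_val hud, dA1, dA2, dB2, Pi.single_apply]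
    all_goals omega
  refine ⟨Lam.1, Lam.2.1, ?_, ?_, ?_⟩
  · intro i
    fin_cases i <;> simp [Pi.sup_apply, hdL0, hdL1] <;> omega
  · refine seg_eq' Lam.1 Mu1.1 al2 Tau1.1 m _ (Mu1.2.2.trans ra2.symm)
      (sa2.trans Tau1.2.1.symm) (by rw [hLam, hA2]; rfl) ?_ ?_ ?_ <;>
    · funext i
      fin_cases i <;>
        simp [hMu1, hTau1, d_mul_val, d_pow_val hud, dA1, dA2, dB2, da2,
          Pi.single_apply, Pi.sup_apply, hdL0, hdL1] <;> omega
  · refine seg_eq' Lam.1 Mu2.1 al1 u n _ (Mu2.2.2.trans ra1.symm)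
      (sa1.trans hur.symm) h3' ?_ ?_ ?_ <;>
    · funext i
      fin_cases i <;>
        simp [hMu2, d_mul_val, d_pow_val hud, dA1, dA2, dB2, da1, hud,
          Pi.single_apply, Pi.sup_apply, hdL0, hdL1] <;> omega

end KGraph

/-- A `(1,1)`-aperiodic quartet at `u` implies no local periodicity at `u`. -/
theorem stmt3 (Λ : KGraph 2) (hrf : Λ.RowFinite) (hns : Λ.NoSources)
    (u al1 al2 be1 be2 : Λ.Path)
    (hq : KGraph.AperiodicQuartet Λ u 1 1 al1 al2 be1 be2) :
    Λ.NoLocalPeriodicity u := by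
  obtain ⟨-, -, hane, hbne, ra1, sa1, da1, ra2, sa2, da2, rb1, sb1, db1, rb2, sb2, db2,
    hc1, hc2, hc3, hc4⟩ := hq
  have hur : Λ.r u = u := by rw [← ra1, Λ.r_r]
  have hus : Λ.s u = u := by rw [← ra1, Λ.s_r]
  have hud : Λ.d u = 0 := by rw [← ra1, Λ.d_r]
  haveI : Fact (Λ.r u = u ∧ Λ.s u = u) := ⟨hur, hus⟩
  have mainA : ∀ mm nn : Fin 2 → ℕ, mm 1 < nn 1 →
      ∃ lam, Λ.r lam = u ∧ mm ⊔ nn ≤ Λ.d lam ∧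
        Λ.seg lam mm (mm + Λ.d lam - (mm ⊔ nn)) ≠
        Λ.seg lam nn (nn + Λ.d lam - (mm ⊔ nn)) := by
    intro mm nn hlt
    obtain ⟨lam, h1, h2, h3, h4⟩ := KGraph.caseA Λ hud al1 al2 be1 be2
      ra1 sa1 da1 ra2 sa2 da2 rb1 sb1 db1 rb2 sb2 db2 hc1 hc3 mm nn hlt
    exact ⟨lam, h1, h2, by rw [h3, h4]; exact hbne⟩
  have mainB : ∀ mm nn : Fin 2 → ℕ, mm 1 = nn 1 → mm 0 < nn 0 →
      ∃ lam, Λ.r lam = u ∧ mm ⊔ nn ≤ Λ.d lam ∧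
        Λ.seg lam mm (mm + Λ.d lam - (mm ⊔ nn)) ≠
        Λ.seg lam nn (nn + Λ.d lam - (mm ⊔ nn)) := by
    intro mm nn heq hlt
    obtain ⟨lam, h1, h2, h3, h4⟩ := KGraph.caseB Λ hur hud al1 al2 be2
      ra1 sa1 da1 ra2 sa2 da2 rb2 sb2 db2 hc1 hc2 mm nn heq hlt
    exact ⟨lam, h1, h2, by rw [h3, h4]; exact fun h => hane h.symm⟩
  intro m n hmn
  rcases lt_trichotomy (m 1) (n 1) with h | h | h
  · exact mainA m n h
  · rcases lt_trichotomy (m 0) (n 0) with h0 | h0 | h0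
    · exact mainB m n h h0
    · exact absurd (funext fun i => by fin_cases i <;> assumption) hmn
    · obtain ⟨lam, hl1, hl2, hl3⟩ := mainB n m h.symm h0
      exact ⟨lam, hl1, by rwa [sup_comm], by rw [sup_comm m n]; exact hl3.symm⟩
  · obtain ⟨lam, hl1, hl2, hl3⟩ := mainA n m h
    exact ⟨lam, hl1, by rwa [sup_comm], by rw [sup_comm m n]; exact hl3.symm⟩
end

section
/- Let Λ be a row-finite 2-graph with no sources. If for every vertex v ∈ Λ^0 there exists a vertex u with v ≤ u at which Λ has a (1,1)-aperiodic quartet, then Λ is aperiodic. -/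
set_option autoImplicit false

open scoped Classical

namespace KGraph

variable {k : ℕ}

section Seg

lemma le_apply {k : ℕ} {m n : Fin k → ℕ} (h : m ≤ n) (i : Fin k) : m i ≤ n i := h i

lemma le_of_apply {k : ℕ} {m n : Fin k → ℕ} (h : ∀ i, m i ≤ n i) : m ≤ n := h


/-- two-step factorization -/
lemma factor3 (Λ : KGraph k) (lam : Λ.Path) (m n : Fin k → ℕ)
    (hmn : m ≤ n) (hn : n ≤ Λ.d lam) :
    ∃ mu sig tau, Λ.s mu = Λ.r sig ∧ Λ.s sig = Λ.r tau ∧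
      Λ.comp (Λ.comp mu sig) tau = lam ∧ Λ.d mu = m ∧ Λ.d sig = n - m ∧
      Λ.d tau = Λ.d lam - n := by
  have hmd : m ≤ Λ.d lam := le_trans hmn hn
  obtain ⟨⟨mu, rest⟩, ⟨h1, h2, h3, h4⟩, -⟩ :=
    Λ.factor lam m (Λ.d lam - m)
      (by funext i; have := le_apply hmd i; simp only [Pi.add_apply, Pi.sub_apply]; omega)
  obtain ⟨⟨sig, tau⟩, ⟨g1, g2, g3, g4⟩, -⟩ :=
    Λ.factor rest (n - m) (Λ.d lam - n)
      (by rw [h4]; funext i; have := le_apply hmd i; have := le_apply hn i; have := le_apply hmn i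
          simp only [Pi.add_apply, Pi.sub_apply]; omega)
  have hms : Λ.s mu = Λ.r sig := by
    rw [h1, ← g2, Λ.r_comp _ _ g1]
  refine ⟨mu, sig, tau, hms, g1, ?_, h3, g3, g4⟩
  rw [Λ.comp_assoc _ _ _ hms g1, g2, h2]

/-- characterization of `seg` -/
lemma seg_eq (Λ : KGraph k) (lam mu sig tau : Λ.Path) (m n : Fin k → ℕ)
    (hmn : m ≤ n) (hn : n ≤ Λ.d lam)
    (c1 : Λ.s mu = Λ.r sig) (c2 : Λ.s sig = Λ.r tau)
    (hc : Λ.comp (Λ.comp mu sig) tau = lam)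
    (d1 : Λ.d mu = m) (d2 : Λ.d sig = n - m) (d3 : Λ.d tau = Λ.d lam - n) :
    Λ.seg lam m n = sig := by
  have hex : ∃ sig', ∃ mu' tau', Λ.s mu' = Λ.r sig' ∧ Λ.s sig' = Λ.r tau' ∧
      Λ.comp (Λ.comp mu' sig') tau' = lam ∧ Λ.d mu' = m ∧ Λ.d sig' = n - m ∧
      Λ.d tau' = Λ.d lam - n := ⟨sig, mu, tau, c1, c2, hc, d1, d2, d3⟩
  obtain ⟨mu', tau', c1', c2', hc', d1', d2', d3'⟩ := hex.choose_spec
  obtain ⟨q, hq, huniq⟩ := Λ.factor lam n (Λ.d lam - n)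
    (by funext i; have := le_apply hn i; simp only [Pi.add_apply, Pi.sub_apply]; omega)
  have key : ∀ MU SIG TAU : Λ.Path, Λ.s MU = Λ.r SIG → Λ.s SIG = Λ.r TAU →
      Λ.comp (Λ.comp MU SIG) TAU = lam → Λ.d MU = m → Λ.d SIG = n - m →
      Λ.d TAU = Λ.d lam - n → (Λ.comp MU SIG, TAU) = q := by
    intro MU SIG TAU e1 e2 e3 e4 e5 e6
    refine huniq _ ⟨?_, e3, ?_, e6⟩
    · rw [Λ.s_comp _ _ e1]; exact e2
    · rw [Λ.d_comp _ _ e1, e4, e5]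
      funext i; have := le_apply hmn i; simp only [Pi.add_apply, Pi.sub_apply]; omega
  have k1 := key mu sig tau c1 c2 hc d1 d2 d3
  have k2 := key mu' hex.choose tau' c1' c2' hc' d1' d2' d3'
  have hMS : Λ.comp mu' hex.choose = Λ.comp mu sig := by
    rw [Prod.ext_iff] at k1 k2
    exact k2.1.trans k1.1.symm
  obtain ⟨q2, hq2, huniq2⟩ := Λ.factor (Λ.comp mu sig) m (n - m)
    (by rw [Λ.d_comp _ _ c1, d1, d2])
  have j1 := huniq2 (mu, sig) ⟨c1, rfl, d1, d2⟩
  have j2 := huniq2 (mu', hex.choose) ⟨c1', hMS, d1', d2'⟩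
  have hfin : hex.choose = sig := by
    rw [Prod.ext_iff] at j1 j2
    exact j2.2.trans j1.2.symm
  rw [seg, dif_pos hex]
  exact hfin

/-- a segment of a segment is a segment -/
lemma seg_seg (Λ : KGraph k) (lam : Λ.Path) (m n r r' : Fin k → ℕ)
    (hmn : m ≤ n) (hn : n ≤ Λ.d lam) (hrr' : r ≤ r') (hr' : r' ≤ n - m) :
    Λ.seg (Λ.seg lam m n) r r' = Λ.seg lam (m + r) (m + r') := by
  obtain ⟨mu, sig, tau, c1, c2, hc, d1, d2, d3⟩ := factor3 Λ lam m n hmn hn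
  rw [seg_eq Λ lam mu sig tau m n hmn hn c1 c2 hc d1 d2 d3]
  have hr'd : r' ≤ Λ.d sig := d2 ▸ hr'
  obtain ⟨P, E, Q, e1, e2, ec, f1, f2, f3⟩ := factor3 Λ sig r r' hrr' hr'd
  rw [seg_eq Λ sig P E Q r r' hrr' hr'd e1 e2 ec f1 f2 f3]
  -- composability facts
  have hPE : Λ.s (Λ.comp P E) = Λ.r Q := by rw [Λ.s_comp _ _ e1]; exact e2
  have hmuP : Λ.s mu = Λ.r P := by
    rw [c1, ← ec, Λ.r_comp _ _ hPE, Λ.r_comp _ _ e1]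
  have hQtau : Λ.s Q = Λ.r tau := by
    rw [← c2, ← ec, Λ.s_comp _ _ hPE]
  have hmuPE : Λ.s mu = Λ.r (Λ.comp P E) := by rw [Λ.r_comp _ _ e1]; exact hmuP
  have hX : Λ.s (Λ.comp (Λ.comp mu P) E) = Λ.r Q := by
    rw [Λ.s_comp _ _ (by rw [Λ.s_comp _ _ hmuP]; exact e1)]; exact e2
  have hc2 : Λ.comp (Λ.comp (Λ.comp (Λ.comp mu P) E) Q) tau = lam := by
    rw [Λ.comp_assoc _ _ _ hmuP e1, Λ.comp_assoc _ _ _ hmuPE hPE, ec, hc]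
  have hc3 : Λ.comp (Λ.comp (Λ.comp mu P) E) (Λ.comp Q tau) = lam := by
    rw [← Λ.comp_assoc _ _ _ hX hQtau, hc2]
  symm
  refine seg_eq Λ lam (Λ.comp mu P) E (Λ.comp Q tau) (m + r) (m + r')
    (le_of_apply fun i => by simp only [Pi.add_apply]; exact Nat.add_le_add_left (le_apply hrr' i) _)
    (le_of_apply fun i => by
      have := le_apply hmn i; have := le_apply hn i; have := le_apply hr' i
      simp only [Pi.add_apply, Pi.sub_apply] at *; omega)
    (by rw [Λ.s_comp _ _ hmuP]; exact e1)
    (by rw [Λ.r_comp _ _ hQtau]; exact e2)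
    hc3
    (by rw [Λ.d_comp _ _ hmuP, d1, f1])
    (by rw [f2]; funext i; simp only [Pi.add_apply, Pi.sub_apply]; omega)
    (by
      rw [Λ.d_comp _ _ hQtau, f3, d2, d3]
      funext i
      have := le_apply hmn i; have := le_apply hn i; have := le_apply hr' i
      simp only [Pi.add_apply, Pi.sub_apply] at *; omega)

end Seg

section Loops

/-- a vertex bundled with its basic properties -/
structure KVtx (Λ : KGraph k) where
  v : Λ.Path
  rv : Λ.r v = v
  sv : Λ.s v = v
  dv : Λ.d v = 0

/-- loops based at a fixed vertex -/
def KLoop (Λ : KGraph k) (U : KVtx Λ) : Type :=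
  {x : Λ.Path // Λ.r x = U.v ∧ Λ.s x = U.v}

namespace KLoop

variable {Λ : KGraph k} {U : KVtx Λ}

lemma compat (x y : KLoop Λ U) : Λ.s x.1 = Λ.r y.1 := by rw [x.2.2, y.2.1]

instance : Monoid (KLoop Λ U) where
  mul x y := ⟨Λ.comp x.1 y.1,
    by rw [Λ.r_comp _ _ (compat x y)]; exact x.2.1,
    by rw [Λ.s_comp _ _ (compat x y)]; exact y.2.2⟩
  one := ⟨U.v, U.rv, U.sv⟩
  mul_assoc x y z := Subtype.ext (Λ.comp_assoc _ _ _ (compat x y) (compat y z))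
  one_mul x := Subtype.ext (by
    show Λ.comp U.v x.1 = x.1
    have h := Λ.id_comp x.1
    rwa [x.2.1] at h)
  mul_one x := Subtype.ext (by
    show Λ.comp x.1 U.v = x.1
    have h := Λ.comp_id x.1
    rwa [x.2.2] at h)

lemma val_mul (x y : KLoop Λ U) : (x * y).1 = Λ.comp x.1 y.1 := rfl

lemma val_one : (1 : KLoop Λ U).1 = U.v := rfl

lemma d_mul_apply (x y : KLoop Λ U) (i : Fin k) :
    Λ.d (x * y).1 i = Λ.d x.1 i + Λ.d y.1 i := by
  rw [val_mul, Λ.d_comp _ _ (compat x y)]; rfl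

lemma d_pow_apply (x : KLoop Λ U) (j : ℕ) (i : Fin k) :
    Λ.d (x ^ j).1 i = j * Λ.d x.1 i := by
  induction j with
  | zero => rw [pow_zero, val_one, U.dv]; simp
  | succ j ih => rw [pow_succ, d_mul_apply, ih]; ring

end KLoop

end Loops

section Key

lemma fin2_ext {α : Type} {x y : Fin 2 → α} (h0 : x 0 = y 0) (h1 : x 1 = y 1) : x = y :=
  funext (Fin.forall_fin_two.mpr ⟨h0, h1⟩)

lemma fin2_le {x y : Fin 2 → ℕ} (h0 : x 0 ≤ y 0) (h1 : x 1 ≤ y 1) : x ≤ y :=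
  Fin.forall_fin_two.mpr ⟨h0, h1⟩

lemma keyV (Λ : KGraph 2) {v : Λ.Path} {U : KVtx Λ}
    (a1 a2 b1 b2 : KLoop Λ U)
    (hbe : b1.1 ≠ b2.1)
    (da1 : Λ.d a1.1 = Pi.single 0 1) (da2 : Λ.d a2.1 = Pi.single 0 1)
    (db1 : Λ.d b1.1 = Pi.single 1 1) (db2 : Λ.d b2.1 = Pi.single 1 1)
    (h21 : Commute b2 a1) (h22 : Commute b2 a2)
    (h12 : SemiconjBy b1 a2 a1)
    (mu0 : Λ.Path) (hmr : Λ.r mu0 = v) (hms : Λ.s mu0 = U.v)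
    (m n : Fin 2 → ℕ) (hcase : m 1 < n 1) :
    ∃ lam, Λ.r lam = v ∧ m ⊔ n ≤ Λ.d lam ∧
      Λ.seg lam m (m + Λ.d lam - (m ⊔ n)) ≠ Λ.seg lam n (n + Λ.d lam - (m ⊔ n)) := by
  have dA10 : Λ.d a1.1 0 = 1 := by rw [da1]; exact Pi.single_eq_same 0 1
  have dA11 : Λ.d a1.1 1 = 0 := by rw [da1]; exact Pi.single_eq_of_ne (by decide) 1
  have dA20 : Λ.d a2.1 0 = 1 := by rw [da2]; exact Pi.single_eq_same 0 1
  have dA21 : Λ.d a2.1 1 = 0 := by rw [da2]; exact Pi.single_eq_of_ne (by decide) 1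
  have dB10 : Λ.d b1.1 0 = 0 := by rw [db1]; exact Pi.single_eq_of_ne (by decide) 1
  have dB11 : Λ.d b1.1 1 = 1 := by rw [db1]; exact Pi.single_eq_same 1 1
  have dB20 : Λ.d b2.1 0 = 0 := by rw [db2]; exact Pi.single_eq_of_ne (by decide) 1
  have dB21 : Λ.d b2.1 1 = 1 := by rw [db2]; exact Pi.single_eq_same 1 1
  have hs10 : (Pi.single (1 : Fin 2) 1 : Fin 2 → ℕ) 0 = 0 := Pi.single_eq_of_ne (by decide) 1
  have hs11 : (Pi.single (1 : Fin 2) 1 : Fin 2 → ℕ) 1 = 1 := Pi.single_eq_same 1 1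
  set p0 : ℕ := m 0 ⊔ n 0 with hp0
  have hm0p : m 0 ≤ p0 := le_sup_left
  have hn0p : n 0 ≤ p0 := le_sup_right
  set N : ℕ := 2 * p0 - m 0 with hNdef
  set K : ℕ := n 1 - m 1 with hKdef
  set M : ℕ := n 1 + 1 + K with hMdef
  set A0 : ℕ := n 0 + p0 - m 0 with hA0def
  have hp0N : p0 ≤ N := by omega
  have hA0N : A0 ≤ N := by omega
  have hK1 : 1 ≤ K := by omega
  set W : KLoop Λ U := a1 ^ N * b2 ^ (n 1) * b1 * b2 ^ K with hW
  set lam : Λ.Path := Λ.comp mu0 W.1 with hlam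
  have hmuX : ∀ X : KLoop Λ U, Λ.s mu0 = Λ.r X.1 := fun X => by rw [hms, X.2.1]
  have hcomp3 : ∀ X Y : KLoop Λ U,
      Λ.comp mu0 ((X * Y).1) = Λ.comp (Λ.comp mu0 X.1) Y.1 := fun X Y => by
    rw [KLoop.val_mul, ← Λ.comp_assoc mu0 X.1 Y.1 (hmuX X) (KLoop.compat X Y)]
  have dlam : ∀ i, Λ.d lam i = Λ.d mu0 i + Λ.d W.1 i := fun i => by
    rw [hlam, Λ.d_comp _ _ (hmuX W)]; rfl
  have dW0 : Λ.d W.1 0 = N := by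
    rw [hW]
    simp only [KLoop.d_mul_apply, KLoop.d_pow_apply, dA10, dB10, dB20]
    omega
  have dW1 : Λ.d W.1 1 = M := by
    rw [hW]
    simp only [KLoop.d_mul_apply, KLoop.d_pow_apply, dA11, dB11, dB21]
    omega
  have dlam0 : Λ.d lam 0 = Λ.d mu0 0 + N := by rw [dlam 0, dW0]
  have dlam1 : Λ.d lam 1 = Λ.d mu0 1 + M := by rw [dlam 1, dW1]
  set PA : KLoop Λ U := a1 ^ p0 * b2 ^ (n 1) with hPA
  set TA : KLoop Λ U := a2 ^ (N - p0) * b2 ^ K with hTA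
  set PB : KLoop Λ U := a1 ^ A0 * b2 ^ (n 1) * b1 * b2 ^ (K - 1) with hPB
  set TB : KLoop Λ U := a2 ^ (N - A0) with hTB
  have IdA : W = PA * b1 * TA := by
    rw [hW, hPA, hTA]
    simp only [mul_assoc]
    rw [← mul_assoc b1 (a2 ^ (N - p0)) (b2 ^ K), (h12.pow_right (N - p0)).eq,
      mul_assoc (a1 ^ (N - p0)) b1 (b2 ^ K),
      ← mul_assoc (b2 ^ (n 1)) (a1 ^ (N - p0)) _, (h21.pow_pow (n 1) (N - p0)).eq,
      mul_assoc (a1 ^ (N - p0)) (b2 ^ (n 1)) _,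
      ← mul_assoc (a1 ^ p0) (a1 ^ (N - p0)) _, ← pow_add,
      Nat.add_sub_cancel' hp0N]
  have IdB : W = PB * b2 * TB := by
    rw [hW, hPB, hTB]
    simp only [mul_assoc]
    rw [← mul_assoc (b2 ^ (K - 1)) b2 (a2 ^ (N - A0)), ← pow_succ,
      show K - 1 + 1 = K from by omega, (h22.pow_pow K (N - A0)).eq,
      ← mul_assoc b1 (a2 ^ (N - A0)) (b2 ^ K), (h12.pow_right (N - A0)).eq,
      mul_assoc (a1 ^ (N - A0)) b1 (b2 ^ K),
      ← mul_assoc (b2 ^ (n 1)) (a1 ^ (N - A0)) _, (h21.pow_pow (n 1) (N - A0)).eq,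
      mul_assoc (a1 ^ (N - A0)) (b2 ^ (n 1)) _,
      ← mul_assoc (a1 ^ A0) (a1 ^ (N - A0)) _, ← pow_add,
      Nat.add_sub_cancel' hA0N]
  have dPA0 : Λ.d PA.1 0 = p0 := by
    rw [hPA]; simp only [KLoop.d_mul_apply, KLoop.d_pow_apply, dA10, dB20]; omega
  have dPA1 : Λ.d PA.1 1 = n 1 := by
    rw [hPA]; simp only [KLoop.d_mul_apply, KLoop.d_pow_apply, dA11, dB21]; omega
  have dTA0 : Λ.d TA.1 0 = N - p0 := by
    rw [hTA]; simp only [KLoop.d_mul_apply, KLoop.d_pow_apply, dA20, dB20]; omega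
  have dTA1 : Λ.d TA.1 1 = K := by
    rw [hTA]; simp only [KLoop.d_mul_apply, KLoop.d_pow_apply, dA21, dB21]; omega
  have dPB0 : Λ.d PB.1 0 = A0 := by
    rw [hPB]; simp only [KLoop.d_mul_apply, KLoop.d_pow_apply, dA10, dB10, dB20]; omega
  have dPB1 : Λ.d PB.1 1 = n 1 + K := by
    rw [hPB]; simp only [KLoop.d_mul_apply, KLoop.d_pow_apply, dA11, dB11, dB21]; omega
  have dTB0 : Λ.d TB.1 0 = N - A0 := by
    rw [hTB]; simp only [KLoop.d_pow_apply, dA20]; omega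
  have dTB1 : Λ.d TB.1 1 = 0 := by
    rw [hTB]; simp only [KLoop.d_pow_apply, dA21]; omega
  set rr : Fin 2 → ℕ := Λ.d mu0 + (m ⊔ n) - m with hrr
  set rr' : Fin 2 → ℕ := rr + Pi.single 1 1 with hrr'
  have hmnA' : m + rr ≤ m + rr' := by
    refine fin2_le ?_ ?_ <;>
      simp only [hrr', hrr, Pi.add_apply, Pi.sub_apply, Pi.sup_apply, hs10, hs11] <;> omega
  have hnA' : m + rr' ≤ Λ.d lam := by
    refine fin2_le ?_ ?_ <;>
      simp only [hrr', hrr, Pi.add_apply, Pi.sub_apply, Pi.sup_apply, hs10, hs11,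
        dlam0, dlam1] <;> omega
  have hnB' : n + rr' ≤ Λ.d lam := by
    refine fin2_le ?_ ?_ <;>
      simp only [hrr', hrr, Pi.add_apply, Pi.sub_apply, Pi.sup_apply, hs10, hs11,
        dlam0, dlam1] <;> omega
  have hmnB' : n + rr ≤ n + rr' := by
    refine fin2_le ?_ ?_ <;>
      simp only [hrr', hrr, Pi.add_apply, Pi.sub_apply, Pi.sup_apply, hs10, hs11] <;> omega
  have hEA : Λ.seg lam (m + rr) (m + rr') = b1.1 := by
    refine seg_eq Λ lam (Λ.comp mu0 PA.1) b1.1 TA.1 (m + rr) (m + rr') hmnA' hnA'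
      ?_ (KLoop.compat b1 TA) ?_ ?_ ?_ ?_
    · rw [Λ.s_comp _ _ (hmuX PA), PA.2.2, b1.2.1]
    · rw [hlam, IdA, hcomp3 (PA * b1) TA, hcomp3 PA b1]
    · rw [Λ.d_comp _ _ (hmuX PA)]
      refine fin2_ext ?_ ?_ <;>
        simp only [hrr, Pi.add_apply, Pi.sub_apply, Pi.sup_apply, dPA0, dPA1] <;> omega
    · refine fin2_ext ?_ ?_ <;>
        simp only [hrr', hrr, Pi.add_apply, Pi.sub_apply, Pi.sup_apply, hs10, hs11,
          dB10, dB11] <;> omega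
    · refine fin2_ext ?_ ?_ <;>
        simp only [hrr', hrr, Pi.add_apply, Pi.sub_apply, Pi.sup_apply, hs10, hs11,
          dTA0, dTA1, dlam0, dlam1] <;> omega
  have hEB : Λ.seg lam (n + rr) (n + rr') = b2.1 := by
    refine seg_eq Λ lam (Λ.comp mu0 PB.1) b2.1 TB.1 (n + rr) (n + rr') hmnB' hnB'
      ?_ (KLoop.compat b2 TB) ?_ ?_ ?_ ?_
    · rw [Λ.s_comp _ _ (hmuX PB), PB.2.2, b2.2.1]
    · rw [hlam, IdB, hcomp3 (PB * b2) TB, hcomp3 PB b2]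
    · rw [Λ.d_comp _ _ (hmuX PB)]
      refine fin2_ext ?_ ?_ <;>
        simp only [hrr, Pi.add_apply, Pi.sub_apply, Pi.sup_apply, dPB0, dPB1] <;> omega
    · refine fin2_ext ?_ ?_ <;>
        simp only [hrr', hrr, Pi.add_apply, Pi.sub_apply, Pi.sup_apply, hs10, hs11,
          dB20, dB21] <;> omega
    · refine fin2_ext ?_ ?_ <;>
        simp only [hrr', hrr, Pi.add_apply, Pi.sub_apply, Pi.sup_apply, hs10, hs11,
          dTB0, dTB1, dlam0, dlam1] <;> omega
  have hSSA : Λ.seg (Λ.seg lam m (m + Λ.d lam - (m ⊔ n))) rr rr'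
      = Λ.seg lam (m + rr) (m + rr') := by
    refine seg_seg Λ lam m (m + Λ.d lam - (m ⊔ n)) rr rr' ?_ ?_ ?_ ?_
    · refine fin2_le ?_ ?_ <;>
        simp only [Pi.add_apply, Pi.sub_apply, Pi.sup_apply, dlam0, dlam1] <;> omega
    · refine fin2_le ?_ ?_ <;>
        simp only [Pi.add_apply, Pi.sub_apply, Pi.sup_apply, dlam0, dlam1] <;> omega
    · refine fin2_le ?_ ?_ <;>
        simp only [hrr', hrr, Pi.add_apply, Pi.sub_apply, Pi.sup_apply, hs10, hs11] <;> omega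
    · refine fin2_le ?_ ?_ <;>
        simp only [hrr', hrr, Pi.add_apply, Pi.sub_apply, Pi.sup_apply, hs10, hs11,
          dlam0, dlam1] <;> omega
  have hSSB : Λ.seg (Λ.seg lam n (n + Λ.d lam - (m ⊔ n))) rr rr'
      = Λ.seg lam (n + rr) (n + rr') := by
    refine seg_seg Λ lam n (n + Λ.d lam - (m ⊔ n)) rr rr' ?_ ?_ ?_ ?_
    · refine fin2_le ?_ ?_ <;>
        simp only [Pi.add_apply, Pi.sub_apply, Pi.sup_apply, dlam0, dlam1] <;> omega
    · refine fin2_le ?_ ?_ <;>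
        simp only [Pi.add_apply, Pi.sub_apply, Pi.sup_apply, dlam0, dlam1] <;> omega
    · refine fin2_le ?_ ?_ <;>
        simp only [hrr', hrr, Pi.add_apply, Pi.sub_apply, Pi.sup_apply, hs10, hs11] <;> omega
    · refine fin2_le ?_ ?_ <;>
        simp only [hrr', hrr, Pi.add_apply, Pi.sub_apply, Pi.sup_apply, hs10, hs11,
          dlam0, dlam1] <;> omega
  refine ⟨lam, ?_, ?_, ?_⟩
  · rw [hlam, Λ.r_comp _ _ (hmuX W), hmr]
  · refine fin2_le ?_ ?_ <;>
      simp only [Pi.sup_apply, dlam0, dlam1] <;> omega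
  · intro hEq
    exact hbe (by
      calc b1.1 = Λ.seg lam (m + rr) (m + rr') := hEA.symm
        _ = Λ.seg (Λ.seg lam m (m + Λ.d lam - (m ⊔ n))) rr rr' := hSSA.symm
        _ = Λ.seg (Λ.seg lam n (n + Λ.d lam - (m ⊔ n))) rr rr' := by rw [hEq]
        _ = Λ.seg lam (n + rr) (n + rr') := hSSB
        _ = b2.1 := hEB)

lemma keyH (Λ : KGraph 2) {v : Λ.Path} {U : KVtx Λ}
    (a1 a2 b2 : KLoop Λ U)
    (hal : a1.1 ≠ a2.1)
    (da1 : Λ.d a1.1 = Pi.single 0 1) (da2 : Λ.d a2.1 = Pi.single 0 1)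
    (db2 : Λ.d b2.1 = Pi.single 1 1)
    (h21 : Commute b2 a1) (h22 : Commute b2 a2)
    (mu0 : Λ.Path) (hmr : Λ.r mu0 = v) (hms : Λ.s mu0 = U.v)
    (m n : Fin 2 → ℕ) (hc1 : m 1 = n 1) (hc0 : m 0 < n 0) :
    ∃ lam, Λ.r lam = v ∧ m ⊔ n ≤ Λ.d lam ∧
      Λ.seg lam m (m + Λ.d lam - (m ⊔ n)) ≠ Λ.seg lam n (n + Λ.d lam - (m ⊔ n)) := by
  have dA10 : Λ.d a1.1 0 = 1 := by rw [da1]; exact Pi.single_eq_same 0 1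
  have dA11 : Λ.d a1.1 1 = 0 := by rw [da1]; exact Pi.single_eq_of_ne (by decide) 1
  have dA20 : Λ.d a2.1 0 = 1 := by rw [da2]; exact Pi.single_eq_same 0 1
  have dA21 : Λ.d a2.1 1 = 0 := by rw [da2]; exact Pi.single_eq_of_ne (by decide) 1
  have dB20 : Λ.d b2.1 0 = 0 := by rw [db2]; exact Pi.single_eq_of_ne (by decide) 1
  have dB21 : Λ.d b2.1 1 = 1 := by rw [db2]; exact Pi.single_eq_same 1 1
  have hs00 : (Pi.single (0 : Fin 2) 1 : Fin 2 → ℕ) 0 = 1 := Pi.single_eq_same 0 1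
  have hs01 : (Pi.single (0 : Fin 2) 1 : Fin 2 → ℕ) 1 = 0 := Pi.single_eq_of_ne (by decide) 1
  set S : ℕ := n 0 - m 0 with hSdef
  have hS1 : 1 ≤ S := by omega
  set N : ℕ := n 0 + 1 + S with hNdef
  set W : KLoop Λ U := a2 ^ (n 0) * a1 * a2 ^ S * b2 ^ (m 1) with hW
  set lam : Λ.Path := Λ.comp mu0 W.1 with hlam
  have hmuX : ∀ X : KLoop Λ U, Λ.s mu0 = Λ.r X.1 := fun X => by rw [hms, X.2.1]
  have hcomp3 : ∀ X Y : KLoop Λ U,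
      Λ.comp mu0 ((X * Y).1) = Λ.comp (Λ.comp mu0 X.1) Y.1 := fun X Y => by
    rw [KLoop.val_mul, ← Λ.comp_assoc mu0 X.1 Y.1 (hmuX X) (KLoop.compat X Y)]
  have dlam : ∀ i, Λ.d lam i = Λ.d mu0 i + Λ.d W.1 i := fun i => by
    rw [hlam, Λ.d_comp _ _ (hmuX W)]; rfl
  have dW0 : Λ.d W.1 0 = N := by
    rw [hW]
    simp only [KLoop.d_mul_apply, KLoop.d_pow_apply, dA10, dA20, dB20]
    omega
  have dW1 : Λ.d W.1 1 = m 1 := by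
    rw [hW]
    simp only [KLoop.d_mul_apply, KLoop.d_pow_apply, dA11, dA21, dB21]
    omega
  have dlam0 : Λ.d lam 0 = Λ.d mu0 0 + N := by rw [dlam 0, dW0]
  have dlam1 : Λ.d lam 1 = Λ.d mu0 1 + m 1 := by rw [dlam 1, dW1]
  set PA : KLoop Λ U := a2 ^ (n 0) * b2 ^ (m 1) with hPA
  set TA : KLoop Λ U := a2 ^ S with hTA
  set PB : KLoop Λ U := a2 ^ (n 0) * a1 * a2 ^ (S - 1) * b2 ^ (m 1) with hPB
  set TB : KLoop Λ U := (1 : KLoop Λ U) with hTB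
  have IdA : W = PA * a1 * TA := by
    rw [hW, hPA, hTA]
    simp only [mul_assoc]
    rw [← mul_assoc (b2 ^ (m 1)) a1 (a2 ^ S), ((h21.pow_left (m 1)).eq),
      mul_assoc a1 (b2 ^ (m 1)) (a2 ^ S), (h22.pow_pow (m 1) S).eq]
  have IdB : W = PB * a2 * TB := by
    rw [hW, hPB, hTB]
    simp only [mul_assoc, mul_one]
    rw [((h22.pow_left (m 1)).eq :  b2 ^ (m 1) * a2 = a2 * b2 ^ (m 1)),
      ← mul_assoc (a2 ^ (S - 1)) a2 (b2 ^ (m 1)), ← pow_succ,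
      show S - 1 + 1 = S from by omega]
  have dPA0 : Λ.d PA.1 0 = n 0 := by
    rw [hPA]; simp only [KLoop.d_mul_apply, KLoop.d_pow_apply, dA20, dB20]; omega
  have dPA1 : Λ.d PA.1 1 = m 1 := by
    rw [hPA]; simp only [KLoop.d_mul_apply, KLoop.d_pow_apply, dA21, dB21]; omega
  have dTA0 : Λ.d TA.1 0 = S := by
    rw [hTA]; simp only [KLoop.d_pow_apply, dA20]; omega
  have dTA1 : Λ.d TA.1 1 = 0 := by
    rw [hTA]; simp only [KLoop.d_pow_apply, dA21]; omega
  have dPB0 : Λ.d PB.1 0 = n 0 + S := by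
    rw [hPB]; simp only [KLoop.d_mul_apply, KLoop.d_pow_apply, dA10, dA20, dB20]; omega
  have dPB1 : Λ.d PB.1 1 = m 1 := by
    rw [hPB]; simp only [KLoop.d_mul_apply, KLoop.d_pow_apply, dA11, dA21, dB21]; omega
  have dTB0 : Λ.d TB.1 0 = 0 := by
    rw [hTB, KLoop.val_one, U.dv]; rfl
  have dTB1 : Λ.d TB.1 1 = 0 := by
    rw [hTB, KLoop.val_one, U.dv]; rfl
  set rr : Fin 2 → ℕ := Λ.d mu0 + (m ⊔ n) - m with hrr
  set rr' : Fin 2 → ℕ := rr + Pi.single 0 1 with hrr'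
  have hmnA' : m + rr ≤ m + rr' := by
    refine fin2_le ?_ ?_ <;>
      simp only [hrr', hrr, Pi.add_apply, Pi.sub_apply, Pi.sup_apply, hs00, hs01] <;> omega
  have hnA' : m + rr' ≤ Λ.d lam := by
    refine fin2_le ?_ ?_ <;>
      simp only [hrr', hrr, Pi.add_apply, Pi.sub_apply, Pi.sup_apply, hs00, hs01,
        dlam0, dlam1] <;> omega
  have hnB' : n + rr' ≤ Λ.d lam := by
    refine fin2_le ?_ ?_ <;>
      simp only [hrr', hrr, Pi.add_apply, Pi.sub_apply, Pi.sup_apply, hs00, hs01,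
        dlam0, dlam1] <;> omega
  have hmnB' : n + rr ≤ n + rr' := by
    refine fin2_le ?_ ?_ <;>
      simp only [hrr', hrr, Pi.add_apply, Pi.sub_apply, Pi.sup_apply, hs00, hs01] <;> omega
  have hEA : Λ.seg lam (m + rr) (m + rr') = a1.1 := by
    refine seg_eq Λ lam (Λ.comp mu0 PA.1) a1.1 TA.1 (m + rr) (m + rr') hmnA' hnA'
      ?_ (KLoop.compat a1 TA) ?_ ?_ ?_ ?_
    · rw [Λ.s_comp _ _ (hmuX PA), PA.2.2, a1.2.1]
    · rw [hlam, IdA, hcomp3 (PA * a1) TA, hcomp3 PA a1]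
    · rw [Λ.d_comp _ _ (hmuX PA)]
      refine fin2_ext ?_ ?_ <;>
        simp only [hrr, Pi.add_apply, Pi.sub_apply, Pi.sup_apply, dPA0, dPA1] <;> omega
    · refine fin2_ext ?_ ?_ <;>
        simp only [hrr', hrr, Pi.add_apply, Pi.sub_apply, Pi.sup_apply, hs00, hs01,
          dA10, dA11] <;> omega
    · refine fin2_ext ?_ ?_ <;>
        simp only [hrr', hrr, Pi.add_apply, Pi.sub_apply, Pi.sup_apply, hs00, hs01,
          dTA0, dTA1, dlam0, dlam1] <;> omega
  have hEB : Λ.seg lam (n + rr) (n + rr') = a2.1 := by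
    refine seg_eq Λ lam (Λ.comp mu0 PB.1) a2.1 TB.1 (n + rr) (n + rr') hmnB' hnB'
      ?_ (KLoop.compat a2 TB) ?_ ?_ ?_ ?_
    · rw [Λ.s_comp _ _ (hmuX PB), PB.2.2, a2.2.1]
    · rw [hlam, IdB, hcomp3 (PB * a2) TB, hcomp3 PB a2]
    · rw [Λ.d_comp _ _ (hmuX PB)]
      refine fin2_ext ?_ ?_ <;>
        simp only [hrr, Pi.add_apply, Pi.sub_apply, Pi.sup_apply, dPB0, dPB1] <;> omega
    · refine fin2_ext ?_ ?_ <;>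
        simp only [hrr', hrr, Pi.add_apply, Pi.sub_apply, Pi.sup_apply, hs00, hs01,
          dA20, dA21] <;> omega
    · refine fin2_ext ?_ ?_ <;>
        simp only [hrr', hrr, Pi.add_apply, Pi.sub_apply, Pi.sup_apply, hs00, hs01,
          dTB0, dTB1, dlam0, dlam1] <;> omega
  have hSSA : Λ.seg (Λ.seg lam m (m + Λ.d lam - (m ⊔ n))) rr rr'
      = Λ.seg lam (m + rr) (m + rr') := by
    refine seg_seg Λ lam m (m + Λ.d lam - (m ⊔ n)) rr rr' ?_ ?_ ?_ ?_
    · refine fin2_le ?_ ?_ <;>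
        simp only [Pi.add_apply, Pi.sub_apply, Pi.sup_apply, dlam0, dlam1] <;> omega
    · refine fin2_le ?_ ?_ <;>
        simp only [Pi.add_apply, Pi.sub_apply, Pi.sup_apply, dlam0, dlam1] <;> omega
    · refine fin2_le ?_ ?_ <;>
        simp only [hrr', hrr, Pi.add_apply, Pi.sub_apply, Pi.sup_apply, hs00, hs01] <;> omega
    · refine fin2_le ?_ ?_ <;>
        simp only [hrr', hrr, Pi.add_apply, Pi.sub_apply, Pi.sup_apply, hs00, hs01,
          dlam0, dlam1] <;> omega
  have hSSB : Λ.seg (Λ.seg lam n (n + Λ.d lam - (m ⊔ n))) rr rr'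
      = Λ.seg lam (n + rr) (n + rr') := by
    refine seg_seg Λ lam n (n + Λ.d lam - (m ⊔ n)) rr rr' ?_ ?_ ?_ ?_
    · refine fin2_le ?_ ?_ <;>
        simp only [Pi.add_apply, Pi.sub_apply, Pi.sup_apply, dlam0, dlam1] <;> omega
    · refine fin2_le ?_ ?_ <;>
        simp only [Pi.add_apply, Pi.sub_apply, Pi.sup_apply, dlam0, dlam1] <;> omega
    · refine fin2_le ?_ ?_ <;>
        simp only [hrr', hrr, Pi.add_apply, Pi.sub_apply, Pi.sup_apply, hs00, hs01] <;> omega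
    · refine fin2_le ?_ ?_ <;>
        simp only [hrr', hrr, Pi.add_apply, Pi.sub_apply, Pi.sup_apply, hs00, hs01,
          dlam0, dlam1] <;> omega
  refine ⟨lam, ?_, ?_, ?_⟩
  · rw [hlam, Λ.r_comp _ _ (hmuX W), hmr]
  · refine fin2_le ?_ ?_ <;>
      simp only [Pi.sup_apply, dlam0, dlam1] <;> omega
  · intro hEq
    exact hal (by
      calc a1.1 = Λ.seg lam (m + rr) (m + rr') := hEA.symm
        _ = Λ.seg (Λ.seg lam m (m + Λ.d lam - (m ⊔ n))) rr rr' := hSSA.symm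
        _ = Λ.seg (Λ.seg lam n (n + Λ.d lam - (m ⊔ n))) rr rr' := by rw [hEq]
        _ = Λ.seg lam (n + rr) (n + rr') := hSSB
        _ = a2.1 := hEB)

end Key


end KGraph

/-- If every vertex connects to a vertex with a `(1,1)`-aperiodic quartet, then
`Λ` is aperiodic. -/
theorem stmt5 (Λ : KGraph 2) (hrf : Λ.RowFinite) (hns : Λ.NoSources)
    (h : ∀ v, Λ.IsVertex v → ∃ u al1 al2 be1 be2, Λ.Conn v u ∧
      KGraph.AperiodicQuartet Λ u 1 1 al1 al2 be1 be2) :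
    Λ.Aperiodic := by
  intro v hv m n hmn
  obtain ⟨u, al1, al2, be1, be2, ⟨mu0, hmr, hms⟩, hQ⟩ := h v hv
  obtain ⟨-, -, hal, hbe, ra1, sa1, da1, ra2, sa2, da2, rb1, sb1, db1, rb2, sb2, db2,
    q21, q22, q11, q12⟩ := hQ
  have hru : Λ.r u = u := by rw [← sa1]; exact Λ.r_s al1
  have hsu : Λ.s u = u := by rw [← sa1]; exact Λ.s_s al1
  have hdu : Λ.d u = 0 := by rw [← sa1]; exact Λ.d_s al1
  let U : KGraph.KVtx Λ := ⟨u, hru, hsu, hdu⟩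
  let a1 : KGraph.KLoop Λ U := ⟨al1, ra1, sa1⟩
  let a2 : KGraph.KLoop Λ U := ⟨al2, ra2, sa2⟩
  let b1 : KGraph.KLoop Λ U := ⟨be1, rb1, sb1⟩
  let b2 : KGraph.KLoop Λ U := ⟨be2, rb2, sb2⟩
  have h21 : Commute b2 a1 := Subtype.ext q21
  have h22 : Commute b2 a2 := Subtype.ext q22
  have h12 : SemiconjBy b1 a2 a1 := Subtype.ext q12
  have hms' : Λ.s mu0 = U.v := hms
  have hal' : a1.1 ≠ a2.1 := hal
  have hbe' : b1.1 ≠ b2.1 := hbe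
  rcases Nat.lt_trichotomy (m 1) (n 1) with hlt | heq | hgt
  · exact KGraph.keyV Λ a1 a2 b1 b2 hbe' da1 da2 db1 db2 h21 h22 h12 mu0 hmr hms' m n hlt
  · rcases Nat.lt_trichotomy (m 0) (n 0) with hlt0 | heq0 | hgt0
    · exact KGraph.keyH Λ a1 a2 b2 hal' da1 da2 db2 h21 h22 mu0 hmr hms' m n heq hlt0
    · exact absurd (KGraph.fin2_ext heq0 heq) hmn
    · obtain ⟨lam, h1, h2, h3⟩ :=
        KGraph.keyH Λ a1 a2 b2 hal' da1 da2 db2 h21 h22 mu0 hmr hms' n m heq.symm hgt0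
      refine ⟨lam, h1, ?_, ?_⟩
      · rwa [sup_comm m n]
      · rw [sup_comm m n]; exact h3.symm
  · obtain ⟨lam, h1, h2, h3⟩ :=
      KGraph.keyV Λ a1 a2 b1 b2 hbe' da1 da2 db1 db2 h21 h22 h12 mu0 hmr hms' n m hgt
    refine ⟨lam, h1, ?_, ?_⟩
    · rwa [sup_comm m n]
    · rw [sup_comm m n]; exact h3.symm
end
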